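/- With F₀ = f, Fₖ = iₖ/f (k = 1,2,3) and w = φ₀ + φ₁i₁ + φ₂i₂ + φ₃i₃, the condition Σⱼ₌₀³(Dφⱼ)Fⱼ = 0 is equivalent to D(w + \bar{w})f + D(w - \bar{w})(1/f) = 0, which in turn is equivalent to the Beltrami-type equation Dw = ((1 - f²)/(1 + f²))·D\bar{w}, provided 1 + f² does not vanish. -/

import Mathlib

noncomputable section

/-- ℝ³ -/
abbrev V3 := Fin 3 → ℝ
/-- Complex quaternions ℍ(ℂ) -/
abbrev HC := Quaternion ℂ

/-- partial derivative ∂ₖ of a function on ℝ³ -/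
noncomputable def pd {E : Type*} [NormedAddCommGroup E] [NormedSpace ℝ E]
    (k : Fin 3) (g : V3 → E) (x : V3) : E :=
  fderiv ℝ g x (Pi.single k 1)

noncomputable def grad {E : Type*} [NormedAddCommGroup E] [NormedSpace ℝ E]
    (g : V3 → E) (x : V3) : Fin 3 → E := fun k => pd k g x

noncomputable def dvg {E : Type*} [NormedAddCommGroup E] [NormedSpace ℝ E]
    (F : V3 → Fin 3 → E) (x : V3) : E :=
  pd 0 (fun y => F y 0) x + pd 1 (fun y => F y 1) x + pd 2 (fun y => F y 2) x

noncomputable def rot {E : Type*} [NormedAddCommGroup E] [NormedSpace ℝ E]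
    (F : V3 → Fin 3 → E) (x : V3) : Fin 3 → E :=
  ![pd 1 (fun y => F y 2) x - pd 2 (fun y => F y 1) x,
    pd 2 (fun y => F y 0) x - pd 0 (fun y => F y 2) x,
    pd 0 (fun y => F y 1) x - pd 1 (fun y => F y 0) x]

/-- scalar Laplacian -/
noncomputable def lapS {E : Type*} [NormedAddCommGroup E] [NormedSpace ℝ E]
    (g : V3 → E) (x : V3) : E :=
  pd 0 (pd 0 g) x + pd 1 (pd 1 g) x + pd 2 (pd 2 g) x

/-- purely vectorial quaternion from a ℂ³ vector -/
def vecq (v : Fin 3 → ℂ) : HC := ⟨0, v 0, v 1, v 2⟩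
/-- scalar quaternion -/
def scq (a : ℂ) : HC := ⟨a, 0, 0, 0⟩

def e1 : HC := ⟨0,1,0,0⟩
def e2 : HC := ⟨0,0,1,0⟩
def e3 : HC := ⟨0,0,0,1⟩

/-- vector part of a quaternion, as a ℂ³ vector -/
def vecPart (a : HC) : Fin 3 → ℂ := ![a.imI, a.imJ, a.imK]

/-- quaternionic conjugation C_H -/
def qconj (a : HC) : HC := ⟨a.re, -a.imI, -a.imJ, -a.imK⟩

/-- componentwise partial derivative of an ℍ(ℂ)-valued function -/
noncomputable def qpd (k : Fin 3) (F : V3 → HC) (x : V3) : HC :=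
  ⟨pd k (fun y => (F y).re) x, pd k (fun y => (F y).imI) x,
   pd k (fun y => (F y).imJ) x, pd k (fun y => (F y).imK) x⟩

/-- The Moisil–Teodorescu (Dirac) operator D = Σₖ iₖ∂ₖ -/
noncomputable def Dq (F : V3 → HC) (x : V3) : HC :=
  e1 * qpd 0 F x + e2 * qpd 1 F x + e3 * qpd 2 F x

/-- componentwise Laplacian of an ℍ(ℂ)-valued function -/
noncomputable def qlap (F : V3 → HC) (x : V3) : HC :=
  qpd 0 (qpd 0 F) x + qpd 1 (qpd 1 F) x + qpd 2 (qpd 2 F) x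

/-- ContDiffOn for ℍ(ℂ)-valued functions, componentwise -/
def QContDiffOn (n : ℕ∞) (F : V3 → HC) (s : Set V3) : Prop :=
  ContDiffOn ℝ n (fun x => (F x).re) s ∧ ContDiffOn ℝ n (fun x => (F x).imI) s ∧
  ContDiffOn ℝ n (fun x => (F x).imJ) s ∧ ContDiffOn ℝ n (fun x => (F x).imK) s

/-- euclidean norm on ℝ³ -/
noncomputable def nrm (x : V3) : ℝ := Real.sqrt (x 0 ^ 2 + x 1 ^ 2 + x 2 ^ 2)

/-- fundamental solution of the Helmholtz operator -/
noncomputable def theta (α : ℂ) (x : V3) : ℂ :=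
  -Complex.exp (Complex.I * α * (nrm x : ℂ)) / (4 * Real.pi * (nrm x : ℂ))

/-- x as a purely vectorial quaternion -/
def xq (x : V3) : HC := vecq fun k => ((x k : ℝ) : ℂ)


/-- The generating quartet F₀ = f, Fₖ = iₖ/f. -/
noncomputable def Ffun (f : V3 → ℂ) : Fin 4 → V3 → HC :=
  ![fun y => scq (f y), fun y => e1 * scq (f y)⁻¹,
    fun y => e2 * scq (f y)⁻¹, fun y => e3 * scq (f y)⁻¹]

/-- w = φ₀ + φ₁i₁ + φ₂i₂ + φ₃i₃. -/
def wfun (φ : Fin 4 → V3 → ℂ) (y : V3) : HC := ⟨φ 0 y, φ 1 y, φ 2 y, φ 3 y⟩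

/-!
Since `w + w̄ = 2φ₀` and `w - w̄ = 2(φ₁i₁ + φ₂i₂ + φ₃i₃)`, with `A = Dφ₀` and
`B = Σₖ (Dφₖ) iₖ` one finds `D(w + w̄) = 2A`, `D(w - w̄) = 2B`, `Dw = A + B`, `Dw̄ = A - B`
and `Σⱼ (Dφⱼ) Fⱼ = A f + B / f`. As `f` is a central scalar, both equivalences become
linear algebra over `ℂ`: `f A + f⁻¹ B = 0 ↔ f² A + B = 0 ↔ (1 + f²)(A + B) = (1 - f²)(A - B)`.
-/

theorem smul_add_inv_smul_eq_zero_iff {K V : Type*} [Field K] [NeZero (2 : K)] [AddCommGroup V]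
    [Module K V] {c : K} (hc : c ≠ 0) (hc2 : 1 + c ^ 2 ≠ 0) (a b : V) :
    c • a + c⁻¹ • b = 0 ↔ a + b = ((1 - c ^ 2) / (1 + c ^ 2)) • (a - b) := by
  have hsq : c • a + c⁻¹ • b = 0 ↔ c ^ 2 • a + b = 0 := by
    constructor <;> intro h
    · linear_combination (norm := match_scalars <;> field_simp <;> ring) c • h
    · linear_combination (norm := match_scalars <;> field_simp <;> ring) c⁻¹ • h
  rw [hsq]
  constructor <;> intro h
  · linear_combination (norm := match_scalars <;> field_simp <;> ring) (2 / (1 + c ^ 2)) • h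
  · have h2 : (2 : K) ≠ 0 := two_ne_zero
    linear_combination (norm := match_scalars <;> field_simp <;> ring) ((1 + c ^ 2) / 2) • h

section PartialDerivatives

variable {E : Type*} [NormedAddCommGroup E] [NormedSpace ℝ E] (k : Fin 3) (g : V3 → E) (x : V3)

theorem pd_const (c : E) : pd k (fun _ => c) x = 0 := by
  simp only [pd, fderiv_const_apply, zero_apply]

theorem pd_neg : pd k (fun y => -g y) x = -pd k g x := by
  simp only [pd, fderiv_fun_neg, neg_apply]

theorem pd_add_self : pd k (fun y => g y + g y) x = pd k g x + pd k g x := by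
  simp only [pd, ← two_smul ℝ, ← Pi.smul_def, fderiv_const_smul_field]
  rfl

end PartialDerivatives

section Dirac

@[simp] theorem qconj_re (a : HC) : (qconj a).re = a.re := rfl
@[simp] theorem qconj_imI (a : HC) : (qconj a).imI = -a.imI := rfl
@[simp] theorem qconj_imJ (a : HC) : (qconj a).imJ = -a.imJ := rfl
@[simp] theorem qconj_imK (a : HC) : (qconj a).imK = -a.imK := rfl

theorem scq_eq_coe (a : ℂ) : scq a = a := rfl

variable (F : V3 → HC) (k : Fin 3) (x : V3)

@[simp] theorem qpd_re : (qpd k F x).re = pd k (fun y => (F y).re) x := rfl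
@[simp] theorem qpd_imI : (qpd k F x).imI = pd k (fun y => (F y).imI) x := rfl
@[simp] theorem qpd_imJ : (qpd k F x).imJ = pd k (fun y => (F y).imJ) x := rfl
@[simp] theorem qpd_imK : (qpd k F x).imK = pd k (fun y => (F y).imK) x := rfl

theorem qpd_qconj : qpd k (fun y => qconj (F y)) x = qconj (qpd k F x) := by
  ext <;> simp [pd_neg]

theorem qpd_add_qconj : qpd k (fun y => F y + qconj (F y)) x = qpd k F x + qconj (qpd k F x) := by
  ext <;> simp [pd_add_self, pd_const]

theorem qpd_sub_qconj : qpd k (fun y => F y - qconj (F y)) x = qpd k F x - qconj (qpd k F x) := by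
  ext <;> simp [pd_add_self, pd_const]

theorem Dq_add_qconj :
    Dq (fun y => F y + qconj (F y)) x = Dq F x + Dq (fun y => qconj (F y)) x := by
  simp only [Dq, qpd_add_qconj, qpd_qconj, mul_add]
  abel

theorem Dq_sub_qconj :
    Dq (fun y => F y - qconj (F y)) x = Dq F x - Dq (fun y => qconj (F y)) x := by
  simp only [Dq, qpd_sub_qconj, qpd_qconj, mul_sub]
  abel

end Dirac

section Beltrami

variable (φ : Fin 4 → V3 → ℂ) (x : V3)

/-- `D(φ₁i₁ + φ₂i₂ + φ₃i₃) = Σₖ (Dφₖ) iₖ`. -/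
def DqVecPart : HC :=
  vecq (grad (φ 1) x) * e1 + vecq (grad (φ 2) x) * e2 + vecq (grad (φ 3) x) * e3

theorem Dq_wfun : Dq (wfun φ) x = vecq (grad (φ 0) x) + DqVecPart φ x := by
  ext <;>
    simp only [Dq, DqVecPart, Quaternion.re_add, Quaternion.imI_add, Quaternion.imJ_add,
      Quaternion.imK_add, Quaternion.re_mul, Quaternion.imI_mul, Quaternion.imJ_mul,
      Quaternion.imK_mul, qpd_re, qpd_imI, qpd_imJ, qpd_imK, wfun] <;>
    simp only [e1, e2, e3, vecq, grad] <;>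
    ring

theorem Dq_qconj_wfun :
    Dq (fun y => qconj (wfun φ y)) x = vecq (grad (φ 0) x) - DqVecPart φ x := by
  simp only [Dq, qpd_qconj]
  ext <;>
    simp only [DqVecPart, Quaternion.re_add, Quaternion.imI_add, Quaternion.imJ_add,
      Quaternion.imK_add, Quaternion.re_sub, Quaternion.imI_sub, Quaternion.imJ_sub,
      Quaternion.imK_sub, Quaternion.re_mul, Quaternion.imI_mul, Quaternion.imJ_mul,
      Quaternion.imK_mul, qconj_re, qconj_imI, qconj_imJ, qconj_imK, qpd_re, qpd_imI, qpd_imJ,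
      qpd_imK, wfun] <;>
    simp only [e1, e2, e3, vecq, grad] <;>
    ring

theorem sum_grad_mul_Ffun (f : V3 → ℂ) :
    ∑ j : Fin 4, vecq (grad (φ j) x) * Ffun f j x
      = vecq (grad (φ 0) x) * scq (f x) + DqVecPart φ x * scq (f x)⁻¹ := by
  simp only [Fin.sum_univ_four, Ffun, DqVecPart, Matrix.cons_val_zero, Matrix.cons_val_one,
    Matrix.cons_val_two, Matrix.cons_val_three, Matrix.head_cons, Matrix.tail_cons, add_mul,
    mul_assoc]
  abel

end Beltrami

theorem stmt17_general (Ω : Set V3) (f : V3 → ℂ)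
    (hf0 : ∀ x ∈ Ω, f x ≠ 0)
    (h1f : ∀ x ∈ Ω, 1 + f x ^ 2 ≠ 0)
    (φ : Fin 4 → V3 → ℂ) :
    ∀ x ∈ Ω,
      ((∑ j : Fin 4, vecq (grad (φ j) x) * Ffun f j x = 0) ↔
        (Dq (fun y => wfun φ y + qconj (wfun φ y)) x * scq (f x)
          + Dq (fun y => wfun φ y - qconj (wfun φ y)) x * scq (f x)⁻¹ = 0)) ∧
      ((Dq (fun y => wfun φ y + qconj (wfun φ y)) x * scq (f x)
          + Dq (fun y => wfun φ y - qconj (wfun φ y)) x * scq (f x)⁻¹ = 0) ↔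
        (Dq (wfun φ) x
          = scq ((1 - f x ^ 2) / (1 + f x ^ 2)) * Dq (fun y => qconj (wfun φ y)) x)) := by
  intro x hx
  set A := vecq (grad (φ 0) x)
  set B := DqVecPart φ x
  have hsum : Dq (fun y => wfun φ y + qconj (wfun φ y)) x = (2 : ℂ) • A := by
    rw [Dq_add_qconj, Dq_wfun, Dq_qconj_wfun]
    module
  have hdiff : Dq (fun y => wfun φ y - qconj (wfun φ y)) x = (2 : ℂ) • B := by
    rw [Dq_sub_qconj, Dq_wfun, Dq_qconj_wfun]
    module
  simp only [sum_grad_mul_Ffun, hsum, hdiff, Dq_wfun, Dq_qconj_wfun, scq_eq_coe,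
    Quaternion.mul_coe_eq_smul, Quaternion.coe_mul_eq_smul]
  have hscale : f x • A + (f x)⁻¹ • B = 0 ↔ f x • (2 : ℂ) • A + (f x)⁻¹ • (2 : ℂ) • B = 0 := by
    constructor <;> intro h
    · linear_combination (norm := module) (2 : ℂ) • h
    · linear_combination (norm := module) (2⁻¹ : ℂ) • h
  exact ⟨hscale, hscale.symm.trans (smul_add_inv_smul_eq_zero_iff (hf0 x hx) (h1f x hx) A B)⟩

/-- Σ(Dφⱼ)Fⱼ = 0 ⇔ D(w+w̄)f + D(w-w̄)(1/f) = 0 ⇔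
Dw = ((1-f²)/(1+f²))·Dw̄. -/
theorem stmt17 (Ω : Set V3) (hΩ : IsOpen Ω) (f : V3 → ℂ)
    (hf : ContDiffOn ℝ 1 f Ω) (hf0 : ∀ x ∈ Ω, f x ≠ 0)
    (h1f : ∀ x ∈ Ω, 1 + f x ^ 2 ≠ 0)
    (φ : Fin 4 → V3 → ℂ) (hφ : ∀ j, ContDiffOn ℝ 1 (φ j) Ω) :
    ∀ x ∈ Ω,
      ((∑ j : Fin 4, vecq (grad (φ j) x) * Ffun f j x = 0) ↔
        (Dq (fun y => wfun φ y + qconj (wfun φ y)) x * scq (f x)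
          + Dq (fun y => wfun φ y - qconj (wfun φ y)) x * scq (f x)⁻¹ = 0)) ∧
      ((Dq (fun y => wfun φ y + qconj (wfun φ y)) x * scq (f x)
          + Dq (fun y => wfun φ y - qconj (wfun φ y)) x * scq (f x)⁻¹ = 0) ↔
        (Dq (wfun φ) x
          = scq ((1 - f x ^ 2) / (1 + f x ^ 2)) * Dq (fun y => qconj (wfun φ y)) x)) :=
  stmt17_general Ω f hf0 h1f φ
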